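/- arXiv:2209.01660 — 4 statements merged into one kernel-verified Lean document; each statement's English description precedes it below -/
import Mathlib

section
/- Let X be a compact Hausdorff space, B(X) = β|X| the Stone–Čech compactification of its underlying discrete set, and ξ_X : B(X) → X the canonical map. Then ξ_X exhibits X as the coequalizer of the two projections p₁, p₂ : B(X) ×_X B(X) ⇉ B(X), where the fiber product is taken along ξ_X in compact Hausdorff spaces. -/
/-- For a compact Hausdorff space `X`, with `B(X) = β|X| = Ultrafilter X` and
`ξ_X = Ultrafilter.extend id : B(X) → X` the canonical map, `ξ_X` exhibits `X` as the
coequalizer in compact Hausdorff spaces of the two projections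
`p₁, p₂ : B(X) ×_X B(X) ⇉ B(X)` (fiber product along `ξ_X`): `ξ_X` is a continuous
surjection coequalizing `p₁, p₂`, and any continuous map `c : B(X) → Z` to a compact
Hausdorff space with `c ∘ p₁ = c ∘ p₂` factors uniquely through `ξ_X` via a continuous map. -/
theorem stmt6 (X : Type u) [TopologicalSpace X] [CompactSpace X] [T2Space X] :
    Continuous (Ultrafilter.extend (id : X → X)) ∧
    Function.Surjective (Ultrafilter.extend (id : X → X)) ∧
    (∀ (Z : Type u) [TopologicalSpace Z] [CompactSpace Z] [T2Space Z]
      (c : Ultrafilter X → Z), Continuous c →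
      (∀ u v : Ultrafilter X,
          Ultrafilter.extend (id : X → X) u = Ultrafilter.extend (id : X → X) v →
          c u = c v) →
      ∃! k : X → Z, Continuous k ∧ k ∘ Ultrafilter.extend (id : X → X) = c) := by
  set ξ := Ultrafilter.extend (id : X → X) with hξ
  have hcont : Continuous ξ := continuous_ultrafilter_extend _
  have hpure : ∀ x : X, ξ (pure x) = x := fun x =>
    congrFun (ultrafilter_extend_extends (id : X → X)) x
  have hsurj : Function.Surjective ξ := fun x => ⟨pure x, hpure x⟩
  refine ⟨hcont, hsurj, ?_⟩
  intro Z _ _ _ c hc hcc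
  have hq : Topology.IsQuotientMap ξ := (hcont.isClosedMap).isQuotientMap hcont hsurj
  refine ⟨c ∘ pure, ⟨?_, ?_⟩, ?_⟩
  · rw [hq.continuous_iff]
    have : (c ∘ pure) ∘ ξ = c := by
      funext u
      exact hcc _ _ (by rw [hpure])
    rw [this]; exact hc
  · funext u
    exact hcc _ _ (by rw [hpure])
  · rintro k ⟨hk, hkξ⟩
    funext x
    have := congrFun hkξ (pure x)
    simpa [hpure x] using this
end

section
/- Let f : Y → X be a surjective map of sets. Then the induced diagram βX → βY ⇉ β(Y ×_X Y) of Stone–Čech compactifications of discrete spaces satisfies the split-(co)equalizer conditions: there exist continuous maps g : βX → βY with βf ∘ g = id and k : βY → β(Y ×_X Y) with βp₁ ∘ k = id and βp₂ ∘ k = g ∘ βf. Consequently, for any presheaf F of sets on the category of Stone–Čech compactifications of discrete spaces, F(βX) → F(βY) ⇉ F(β(Y ×_X Y)) is an equalizer. -/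
open CategoryTheory Limits Opposite

universe u

attribute [local instance] ConcreteCategory.instFunLike

/-- The category of β-sets: the full subcategory of compact Hausdorff spaces consisting of
Stone–Čech compactifications of discrete spaces (spaces of ultrafilters). -/
abbrev BSetProp : CompHaus.{u} → Prop := fun X => ∃ S : Type u, Nonempty (X ≃ₜ Ultrafilter S)

abbrev BSet := ObjectProperty.FullSubcategory BSetProp.{u}

/-- The β-set `βS` of a set `S`. -/
def bset (S : Type u) : BSet.{u} := ⟨CompHaus.of (Ultrafilter S), S, ⟨Homeomorph.refl _⟩⟩

/-- The continuous extension `βh : βS → βT` of a function `h : S → T`. -/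
noncomputable def bsetHom {S T : Type u} (f : S → T) : bset S ⟶ bset T :=
  ObjectProperty.homMk (ConcreteCategory.ofHom ⟨Ultrafilter.extend (pure ∘ f), continuous_ultrafilter_extend _⟩)

/-- The set-theoretic fiber product `Y ×_X Y`. -/
abbrev FibProd {X Y : Type u} (f : Y → X) : Type u := { p : Y × Y // f p.1 = f p.2 }

/-!
A set-theoretic section `s` of `f` gives `g = βs` and `k = βt` with `t y = (y, s (f y))`. Since `β` is a
functor (morphisms out of `βS` are determined by their values on principal ultrafilters), the
identities `f ∘ s = id`, `p₁ ∘ t = id`, `p₂ ∘ t = s ∘ f` make `βf` a split coequalizer of `βp₂`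
and `βp₁`. A contravariant functor turns it into a split equalizer of sets, and split equalizers
are equalizers.
-/

lemma bset_hom_ext {S : Type u} {Z : BSet.{u}} {a b : bset S ⟶ Z}
    (h : ∀ s : S, a.hom (pure s) = b.hom (pure s)) : a = b := by
  apply ObjectProperty.hom_ext
  apply ConcreteCategory.hom_ext
  refine congrFun (denseRange_pure.equalizer ?_ ?_ (funext h))
  · exact (ConcreteCategory.hom a.hom).continuous
  · exact (ConcreteCategory.hom b.hom).continuous

lemma bsetHom_pure {S T : Type u} (f : S → T) (s : S) :
    (bsetHom f).hom (pure s) = pure (f s) :=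
  ultrafilter_extend_pure _ s

lemma bsetHom_comp {S T U : Type u} (f : S → T) (g : T → U) :
    bsetHom (g ∘ f) = bsetHom f ≫ bsetHom g :=
  bset_hom_ext fun s =>
    (bsetHom_pure _ s).trans ((congrArg (bsetHom g).hom (bsetHom_pure f s)).trans
      (bsetHom_pure g (f s))).symm

lemma bsetHom_id (S : Type u) : bsetHom (id : S → S) = 𝟙 (bset S) :=
  bset_hom_ext (bsetHom_pure id)

namespace CategoryTheory

section

variable {C : Type*} [Category C] {X Y Z : C} {f g : X ⟶ Y} {π : Y ⟶ Z}

def IsSplitCoequalizer.op (q : IsSplitCoequalizer f g π) :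
    IsSplitEqualizer f.op g.op π.op where
  leftRetraction := q.rightSection.op
  rightRetraction := q.leftSection.op
  condition := congrArg Quiver.Hom.op q.condition
  ι_leftRetraction := congrArg Quiver.Hom.op q.rightSection_π
  bottom_rightRetraction := congrArg Quiver.Hom.op q.leftSection_bottom
  top_rightRetraction := congrArg Quiver.Hom.op q.leftSection_top

end

namespace IsSplitEqualizer

variable {W X Y : Type u} {f g : X ⟶ Y} {ι : W ⟶ X}

lemma injective (q : IsSplitEqualizer f g ι) : Function.Injective ι :=
  Function.LeftInverse.injective (g := q.leftRetraction) fun w =>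
    types_congr_hom q.ι_leftRetraction w

lemma eq_iff_exists (q : IsSplitEqualizer f g ι) (x : X) : f x = g x ↔ ∃ w, ι w = x := by
  constructor
  · intro h
    refine ⟨q.leftRetraction x, ?_⟩
    calc ι (q.leftRetraction x) = q.rightRetraction (f x) :=
          (types_congr_hom q.top_rightRetraction x).symm
      _ = q.rightRetraction (g x) := by rw [h]
      _ = x := types_congr_hom q.bottom_rightRetraction x
  · rintro ⟨w, rfl⟩
    exact types_congr_hom q.condition w

end IsSplitEqualizer

end CategoryTheory

noncomputable def bsetSplitCoequalizer {X Y : Type u} (f : Y → X) (hf : Function.Surjective f) :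
    IsSplitCoequalizer (bsetHom fun p : FibProd f => p.1.2) (bsetHom fun p : FibProd f => p.1.1)
      (bsetHom f) where
  rightSection := bsetHom (Function.surjInv hf)
  leftSection := bsetHom fun y => ⟨(y, Function.surjInv hf (f y)), (Function.surjInv_eq hf _).symm⟩
  condition := by
    rw [← bsetHom_comp, ← bsetHom_comp]
    exact congrArg bsetHom (funext fun p => p.2.symm)
  rightSection_π := by
    rw [← bsetHom_comp, ← bsetHom_id]
    exact congrArg bsetHom (funext (Function.surjInv_eq hf))
  leftSection_bottom := by rw [← bsetHom_comp, ← bsetHom_id]; rfl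
  leftSection_top := by rw [← bsetHom_comp, ← bsetHom_comp]; rfl

/-- For a surjective map of sets `f : Y → X`, the diagram
`βX → βY ⇉ β(Y ×_X Y)` satisfies the split-(co)equalizer conditions: there are continuous
`g : βX → βY` with `βf ∘ g = id` and `k : βY → β(Y ×_X Y)` with `βp₁ ∘ k = id` and
`βp₂ ∘ k = g ∘ βf`. Consequently, for every presheaf of sets `F` on the category of
β-sets, `F(βX) → F(βY) ⇉ F(β(Y ×_X Y))` is an equalizer. -/
theorem stmt12 {X Y : Type u} (f : Y → X) (hf : Function.Surjective f) :
    (∃ (g : bset X ⟶ bset Y) (k : bset Y ⟶ bset (FibProd f)),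
        g ≫ bsetHom f = 𝟙 (bset X) ∧
        k ≫ bsetHom (fun p : FibProd f => p.1.1) = 𝟙 (bset Y) ∧
        k ≫ bsetHom (fun p : FibProd f => p.1.2) = bsetHom f ≫ g) ∧
    ∀ F : BSet.{u}ᵒᵖ ⥤ Type u,
      Function.Injective (F.map (bsetHom f).op) ∧
      ∀ y : F.obj (op (bset Y)),
        (F.map (bsetHom (fun p : FibProd f => p.1.1)).op y
            = F.map (bsetHom (fun p : FibProd f => p.1.2)).op y
          ↔ ∃ x, F.map (bsetHom f).op x = y) := by
  let q := bsetSplitCoequalizer f hf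
  refine ⟨⟨q.rightSection, q.leftSection, q.rightSection_π, q.leftSection_bottom,
    q.leftSection_top⟩, fun F => ?_⟩
  let e := q.op.map F
  exact ⟨e.injective, fun y => eq_comm.trans (e.eq_iff_exists y)⟩
end

section
/- Let F : CompHaus^op → Set be a functor satisfying the descent condition: for every continuous surjection f : Y → X of compact Hausdorff spaces, F(X) → F(Y) ⇉ F(Y ×_X Y) is an equalizer. Then for every compact Hausdorff space X, the natural map F(X) → eq( F(B(X)) ⇉ F(B²(X)) ) is a bijection, where B(X) = β|X|, B²(X) = B(B(X) ×_X B(X)), and the two maps are induced by the two composites B²(X) → B(X) ×_X B(X) ⇉ B(X). -/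
open CategoryTheory Limits Opposite

universe u v

attribute [local instance] ConcreteCategory.instFunLike

/-- `B(X) = β|X|`: the Stone–Čech compactification of the underlying discrete set of `X`. -/
noncomputable def B (X : CompHaus.{u}) : CompHaus.{u} := CompHaus.of (Ultrafilter X)

/-- The canonical surjection `ξ_X : B(X) → X` sending an ultrafilter to its limit. -/
noncomputable def xi (X : CompHaus.{u}) : B X ⟶ X :=
  ConcreteCategory.ofHom ⟨Ultrafilter.extend id, continuous_ultrafilter_extend _⟩

/-- The fiber product `B(X) ×_X B(X)` along `ξ_X` (as a set; its `β` is `B²(X)`). -/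
def W (X : CompHaus.{u}) : Type u :=
  { p : Ultrafilter X × Ultrafilter X // xi X p.1 = xi X p.2 }

/-- `B²(X) = B(B(X) ×_X B(X))`. -/
noncomputable def B2 (X : CompHaus.{u}) : CompHaus.{u} := CompHaus.of (Ultrafilter (W X))

/-- The first map `π₁ = p₁ ∘ ξ_{B(X) ×_X B(X)} : B²(X) → B(X)`, i.e. the canonical
continuous extension of the first projection. -/
noncomputable def pi1 (X : CompHaus.{u}) : B2 X ⟶ B X :=
  ConcreteCategory.ofHom ⟨Ultrafilter.extend (fun w : W X => w.1.1), continuous_ultrafilter_extend _⟩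

/-- The second map `π₂ = p₂ ∘ ξ_{B(X) ×_X B(X)} : B²(X) → B(X)`. -/
noncomputable def pi2 (X : CompHaus.{u}) : B2 X ⟶ B X :=
  ConcreteCategory.ofHom ⟨Ultrafilter.extend (fun w : W X => w.1.2), continuous_ultrafilter_extend _⟩

/-!
The map `(π₁, π₂) : B²(X) → B(X) ×_X B(X)` into the categorical pullback is surjective, since
every point of the pullback is the image of a principal ultrafilter on the set-theoretic fibre
product `W X`. By descent `F` turns this surjection into an injection, so `F(π₁) y = F(π₂) y`
holds exactly when `y` equalizes the two pullback projections, i.e. (descent along the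
surjection `ξ_X`) when `y` comes from `F(X)`.
-/

lemma CategoryTheory.Limits.Concrete.pullback_ext {C : Type*} [Category.{v} C] {FC : C → C → Type*}
    {CC : C → Type v} [∀ X Y, FunLike (FC X Y) (CC X) (CC Y)] [ConcreteCategory.{v} C FC] {X₁ X₂ S : C}
    {f₁ : X₁ ⟶ S} {f₂ : X₂ ⟶ S} [HasPullback f₁ f₂] [PreservesLimit (cospan f₁ f₂) (forget C)]
    {p q : ToType (pullback f₁ f₂)} (hfst : pullback.fst f₁ f₂ p = pullback.fst f₁ f₂ q)
    (hsnd : pullback.snd f₁ f₂ p = pullback.snd f₁ f₂ q) : p = q := by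
  obtain ⟨u, v, h, rfl⟩ := Concrete.pullbackMk_surjective f₁ f₂ p
  obtain ⟨u', v', h', rfl⟩ := Concrete.pullbackMk_surjective f₁ f₂ q
  simp only [Concrete.pullbackMk_fst, Concrete.pullbackMk_snd] at hfst hsnd
  subst hfst hsnd
  rfl

lemma CategoryTheory.FunctorToTypes.map_comp_op_eq_iff {C : Type*} [Category C]
    (F : Cᵒᵖ ⥤ Type*) {Z P Y : C} {g : Z ⟶ P} (hg : Function.Injective (F.map g.op))
    (a b : P ⟶ Y) (y : F.obj (op Y)) :
    F.map (g ≫ a).op y = F.map (g ≫ b).op y ↔ F.map a.op y = F.map b.op y := by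
  simp only [op_comp, Functor.map_comp_apply, hg.eq_iff]

lemma xi_pure (X : CompHaus.{u}) (x : X) : xi X (pure x : Ultrafilter X) = x :=
  congrFun (ultrafilter_extend_extends id) x

lemma xi_surjective (X : CompHaus.{u}) : Function.Surjective (xi X) :=
  fun x => ⟨pure x, xi_pure X x⟩

lemma pi1_pure (X : CompHaus.{u}) (w : W X) : pi1 X (pure w : Ultrafilter (W X)) = w.1.1 :=
  congrFun (ultrafilter_extend_extends _) w

lemma pi2_pure (X : CompHaus.{u}) (w : W X) : pi2 X (pure w : Ultrafilter (W X)) = w.1.2 :=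
  congrFun (ultrafilter_extend_extends _) w

lemma pi1_comp_xi (X : CompHaus.{u}) : pi1 X ≫ xi X = pi2 X ≫ xi X := by
  ext t
  refine congrFun (denseRange_pure.equalizer (ConcreteCategory.hom (pi1 X ≫ xi X)).continuous
    (ConcreteCategory.hom (pi2 X ≫ xi X)).continuous ?_) t
  funext w
  exact (congrArg (xi X) (pi1_pure X w)).trans (w.2.trans (congrArg (xi X) (pi2_pure X w)).symm)

lemma lift_pi1_pi2_surjective (X : CompHaus.{u}) :
    Function.Surjective (pullback.lift (pi1 X) (pi2 X) (pi1_comp_xi X)) := by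
  intro p
  let w : W X := ⟨(pullback.fst (xi X) (xi X) p, pullback.snd (xi X) (xi X) p),
    ConcreteCategory.congr_hom (pullback.condition (f := xi X) (g := xi X)) p⟩
  refine ⟨pure w, Concrete.pullback_ext (C := CompHaus.{u}) ?_ ?_⟩
  · exact (ConcreteCategory.congr_hom (pullback.lift_fst _ _ _) _).trans (pi1_pure X w)
  · exact (ConcreteCategory.congr_hom (pullback.lift_snd _ _ _) _).trans (pi2_pure X w)

/-- Let `F : CompHaus^op ⥤ Set` satisfy the descent condition: for every
continuous surjection `f : Y → X` of compact Hausdorff spaces, `F(X) → F(Y) ⇉ F(Y ×_X Y)`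
is an equalizer. Then for every compact Hausdorff `X`, the natural map
`F(X) → eq( F(B(X)) ⇉ F(B²(X)) )` is a bijection: `F(ξ_X)` is injective with range exactly
the set where the two maps `F(π₁), F(π₂) : F(B(X)) → F(B²(X))` agree. -/
theorem stmt13 (F : CompHaus.{u}ᵒᵖ ⥤ Type u)
    (hF : ∀ (X Y : CompHaus.{u}) (f : Y ⟶ X), Function.Surjective f →
      Function.Injective (F.map f.op) ∧
      ∀ y : F.obj (op Y),
        (F.map (pullback.fst f f).op y = F.map (pullback.snd f f).op y
          ↔ ∃ x, F.map f.op x = y))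
    (X : CompHaus.{u}) :
    Function.Injective (F.map (xi X).op) ∧
    ∀ y : F.obj (op (B X)),
      (F.map (pi1 X).op y = F.map (pi2 X).op y ↔ ∃ x, F.map (xi X).op x = y) := by
  obtain ⟨hinj, hdescent⟩ := hF X (B X) (xi X) (xi_surjective X)
  refine ⟨hinj, fun y => ?_⟩
  have hlift := (hF _ _ _ (lift_pi1_pi2_surjective X)).1
  simpa only [pullback.lift_fst, pullback.lift_snd] using
    (FunctorToTypes.map_comp_op_eq_iff F hlift _ _ y).trans (hdescent y)
end

section
/- The restriction functor from the category of sheaves of sets on compact Hausdorff spaces (functors F : CompHaus^op → Set such that for every continuous surjection f : Y → X, F(X) → F(Y) ⇉ F(Y ×_X Y) is an equalizer) to the category of presheaves of sets on the full subcategory of Stone–Čech compactifications of discrete spaces (β-sets) is an equivalence of categories. -/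
open CategoryTheory Limits Opposite

universe u

attribute [local instance] ConcreteCategory.instFunLike

/-- The sheaf condition `(⋆)`: for every continuous surjection `f : Y → X` of compact
Hausdorff spaces, `F(X) → F(Y) ⇉ F(Y ×_X Y)` is an equalizer. -/
def DescentCond (F : CompHaus.{u}ᵒᵖ ⥤ Type u) : Prop :=
  ∀ (X Y : CompHaus.{u}) (f : Y ⟶ X), Function.Surjective f →
    Function.Injective (F.map f.op) ∧
    ∀ y : F.obj (op Y),
      (F.map (pullback.fst f f).op y = F.map (pullback.snd f f).op y
        ↔ ∃ x, F.map f.op x = y)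

/-- The restriction functor from sheaves on compact Hausdorff spaces to presheaves on
β-sets, given by restricting along the (opposite of the) full inclusion `BSet ⥤ CompHaus`. -/
noncomputable def res :
    ObjectProperty.FullSubcategory DescentCond.{u} ⥤ (BSet.{u}ᵒᵖ ⥤ Type u) :=
  ObjectProperty.ι DescentCond.{u} ⋙
    (Functor.whiskeringLeft BSet.{u}ᵒᵖ CompHaus.{u}ᵒᵖ (Type u)).obj (ObjectProperty.ι BSetProp.{u}).op

/-!
A compact Hausdorff space `X` is covered by the projective β-set `βX` through the counit
`ε : βX → X`. A presheaf `P` on β-sets extends to `X` by the sections of `P(βX)` that descend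
along `ε`: their pullbacks along any two maps `T → βX` from a β-set that agree after `ε` coincide.
By projectivity, a descent datum along a surjection `f : Y → X` lifts through `β(Y ×_X Y)` to
descent along `f ∘ ε`, and pulling back along `β` of a set-theoretic section of `f` then produces
the descended section; so the extension is a sheaf, and on a β-set `T` it gives back `P(T)`
because `ε_T` has a section. Conversely, for a sheaf `F'` the map `F'(X) → F'(βX)` is injective
with image cut out by descent along `ε`, so a map into `F'` is determined by, and can be built
from, its components on β-sets.
-/

noncomputable section

namespace BSet

abbrev of (X : CompHaus.{u}) : BSet.{u} := ⟨CompHaus.of (Ultrafilter X), X, ⟨Homeomorph.refl _⟩⟩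

def counit (X : CompHaus.{u}) : (of X).obj ⟶ X :=
  ConcreteCategory.ofHom ⟨Ultrafilter.extend id, continuous_ultrafilter_extend id⟩

lemma counit_pure {X : CompHaus.{u}} (x : X) : counit X (pure x) = x :=
  congr_fun (ultrafilter_extend_extends (id : X → X)) x

lemma counit_surjective (X : CompHaus.{u}) : Function.Surjective (counit X) :=
  fun x => ⟨pure x, counit_pure x⟩

instance (X : CompHaus.{u}) : Epi (counit X) :=
  (CompHaus.epi_iff_surjective _).mpr (counit_surjective X)

lemma hom_ext_pure {S : Type u} {Y : CompHaus.{u}} {f g : CompHaus.of (Ultrafilter S) ⟶ Y}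
    (h : ∀ x : S, f (pure x) = g (pure x)) : f = g :=
  ConcreteCategory.hom_ext _ _ <| congr_fun <|
    denseRange_pure.equalizer (ConcreteCategory.hom f).continuous
      (ConcreteCategory.hom g).continuous (funext h)

def betaMap {X Y : CompHaus.{u}} (f : X → Y) : (of X).obj ⟶ (of Y).obj :=
  ConcreteCategory.ofHom ⟨Ultrafilter.extend (pure ∘ f), continuous_ultrafilter_extend _⟩

lemma betaMap_pure {X Y : CompHaus.{u}} (f : X → Y) (x : X) :
    betaMap f (pure x) = pure (f x) :=
  congr_fun (ultrafilter_extend_extends (pure ∘ f)) x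

lemma betaMap_comp_counit {X Y : CompHaus.{u}} (f : X ⟶ Y) :
    betaMap f ≫ counit Y = counit X ≫ f :=
  hom_ext_pure fun x => by rw [comp_apply, comp_apply, betaMap_pure, counit_pure, counit_pure]

lemma betaMap_id (X : CompHaus.{u}) : betaMap ⇑(𝟙 X) = 𝟙 (of X).obj :=
  hom_ext_pure fun x => by rw [id_apply, betaMap_pure]; rfl

lemma betaMap_comp {X Y Z : CompHaus.{u}} (f : X ⟶ Y) (g : Y ⟶ Z) :
    betaMap ⇑(f ≫ g) = betaMap f ≫ betaMap g :=
  hom_ext_pure fun x => by rw [comp_apply, betaMap_pure, betaMap_pure, betaMap_pure]; rfl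

lemma betaMap_surjInv_comp {X Y : CompHaus.{u}} {f : Y ⟶ X} (hf : Function.Surjective f) :
    betaMap (Function.surjInv hf) ≫ betaMap f = 𝟙 (of X).obj :=
  hom_ext_pure fun x => by
    rw [comp_apply, betaMap_pure, betaMap_pure, Function.surjInv_eq hf, id_apply]

instance (T : BSet.{u}) : Projective T.obj := by
  obtain ⟨S, ⟨e⟩⟩ := T.property
  exact Projective.of_iso (CompHausLike.isoOfHomeo e.symm) (CompHaus.projective_ultrafilter S)

section Presheaf

variable (P : BSet.{u}ᵒᵖ ⥤ Type u)

def pull {T T' : BSet.{u}} (g : T.obj ⟶ T'.obj) (x : P.obj (op T')) : P.obj (op T) :=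
  P.map (ObjectProperty.homMk g).op x

lemma pull_comp {T T' T'' : BSet.{u}} (f : T.obj ⟶ T'.obj) (g : T'.obj ⟶ T''.obj)
    (x : P.obj (op T'')) : pull P (f ≫ g) x = pull P f (pull P g x) :=
  P.map_comp_apply (ObjectProperty.homMk g).op (ObjectProperty.homMk f).op x

lemma pull_id {T : BSet.{u}} (x : P.obj (op T)) : pull P (𝟙 T.obj) x = x :=
  P.map_id_apply (op T) x

def Descends {Y Z : CompHaus.{u}} (g : (of Y).obj ⟶ Z) (y : P.obj (op (of Y))) : Prop :=
  ∀ ⦃T : BSet.{u}⦄ (a b : T.obj ⟶ (of Y).obj), a ≫ g = b ≫ g → pull P a y = pull P b y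

variable {P}

lemma Descends.pull_betaMap {X Y : CompHaus.{u}} (f : X ⟶ Y) {y : P.obj (op (of Y))}
    (hy : Descends P (counit Y) y) : Descends P (counit X) (pull P (betaMap f) y) := by
  intro T a b h
  rw [← pull_comp, ← pull_comp]
  apply hy
  rw [Category.assoc, Category.assoc, betaMap_comp_counit, reassoc_of% h]

/-- Projectivity of β-sets lifts any pair of maps agreeing after `ε ≫ f` to `β(Y ×_X Y)`. -/
lemma Descends.comp {X Y : CompHaus.{u}} (f : Y ⟶ X) {y : P.obj (op (of Y))}
    (hy : Descends P (counit Y) y)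
    (hpb : pull P (betaMap (pullback.fst f f)) y =
      pull P (betaMap (pullback.snd f f)) y) :
    Descends P (counit Y ≫ f) y := by
  intro T a b h
  obtain ⟨d, hd⟩ := Projective.factors
    (pullback.lift (a ≫ counit Y) (b ≫ counit Y) (by simpa only [Category.assoc] using h))
    (counit (pullback f f))
  calc pull P a y = pull P (d ≫ betaMap (pullback.fst f f)) y :=
        hy _ _ (by rw [Category.assoc, betaMap_comp_counit, reassoc_of% hd, pullback.lift_fst])
    _ = pull P (d ≫ betaMap (pullback.snd f f)) y := by
        rw [pull_comp, pull_comp, hpb]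
    _ = pull P b y :=
        hy _ _ (by rw [Category.assoc, betaMap_comp_counit, reassoc_of% hd, pullback.lift_snd])

variable (P)

/-- This wide equalizer agrees with `eq(P(βX) ⇉ P(β(βX ×_X βX)))`, since `β(βX ×_X βX)`
is projective. -/
def extension : CompHaus.{u}ᵒᵖ ⥤ Type u where
  obj X := {y : P.obj (op (of X.unop)) // Descends P (counit X.unop) y}
  map f := TypeCat.ofHom fun y =>
    ⟨pull P (betaMap f.unop) y.1, y.2.pull_betaMap f.unop⟩
  map_id X := ConcreteCategory.hom_ext _ _ fun y => Subtype.ext <| by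
    show pull P (betaMap ⇑(𝟙 X.unop)) y.1 = y.1
    rw [betaMap_id, pull_id]
  map_comp f g := ConcreteCategory.hom_ext _ _ fun y => Subtype.ext <| by
    show pull P (betaMap ⇑(g.unop ≫ f.unop)) y.1 =
      pull P (betaMap g.unop) (pull P (betaMap f.unop) y.1)
    rw [betaMap_comp, pull_comp]

lemma extension_map_val {X Y : CompHaus.{u}} (f : Y ⟶ X) (x : (extension P).obj (op X)) :
    ((extension P).map f.op x).1 = pull P (betaMap f) x.1 :=
  rfl

/-- Descent along `f` is witnessed by pulling back along `β` of a set-theoretic section of `f`. -/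
lemma extension_descentCond : DescentCond (extension P) := by
  intro X Y f hf
  have hsec : betaMap (Function.surjInv hf) ≫ counit Y ≫ f = counit X := by
    rw [← betaMap_comp_counit, ← Category.assoc, betaMap_surjInv_comp, Category.id_comp]
  refine ⟨fun u v h => Subtype.ext ?_, fun y => ⟨fun hy => ?_, ?_⟩⟩
  · have h' := congrArg (pull P (betaMap (Function.surjInv hf))) (congrArg Subtype.val h)
    rwa [extension_map_val, extension_map_val, ← pull_comp, ← pull_comp, betaMap_surjInv_comp,
      pull_id, pull_id] at h'
  · have hy' : Descends P (counit Y ≫ f) y.1 := y.2.comp f (congrArg Subtype.val hy)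
    let x : (extension P).obj (op X) :=
      ⟨pull P (betaMap (Function.surjInv hf)) y.1, fun T a b hab => by
        rw [← pull_comp, ← pull_comp]
        exact hy' _ _ (by rw [Category.assoc, Category.assoc, hsec, hab])⟩
    refine ⟨x, Subtype.ext ?_⟩
    rw [extension_map_val, ← pull_comp]
    refine (hy' _ (𝟙 _) ?_).trans (pull_id P _)
    rw [Category.assoc, hsec, Category.id_comp]
    exact betaMap_comp_counit f
  · rintro ⟨x, rfl⟩
    rw [← Functor.map_comp_apply, ← Functor.map_comp_apply, ← op_comp, ← op_comp,
      pullback.condition]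

def counitSection (T : BSet.{u}) : T.obj ⟶ (of T.obj).obj :=
  Projective.factorThru (𝟙 T.obj) (counit T.obj)

def restrictExtensionEquiv (T : BSet.{u}) : P.obj (op T) ≃ (extension P).obj (op T.obj) where
  toFun p := ⟨pull P (counit T.obj) p, fun _ a b h => by rw [← pull_comp, ← pull_comp, h]⟩
  invFun y := pull P (counitSection T) y.1
  left_inv p := by
    show pull P (counitSection T) (pull P (counit T.obj) p) = p
    rw [← pull_comp, counitSection, Projective.factorThru_comp, pull_id]
  right_inv y := Subtype.ext <| by
    show pull P (counit T.obj) (pull P (counitSection T) y.1) = y.1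
    rw [← pull_comp]
    refine (y.2 _ (𝟙 _) ?_).trans (pull_id P _)
    rw [Category.assoc, counitSection, Projective.factorThru_comp, Category.comp_id,
      Category.id_comp]

def restrictExtensionIso : P ≅ (ObjectProperty.ι BSetProp.{u}).op ⋙ extension P :=
  NatIso.ofComponents (fun T => (restrictExtensionEquiv P T.unop).toIso) fun {T₁ T₂} ψ => by
    ext p
    apply Subtype.ext
    show pull P (counit T₂.unop.obj) (pull P ψ.unop.hom p) =
      pull P (betaMap ψ.unop.hom) (pull P (counit T₁.unop.obj) p)
    rw [← pull_comp, ← pull_comp, betaMap_comp_counit]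

end Presheaf

section Restriction

variable {F F' : CompHaus.{u}ᵒᵖ ⥤ Type u}

lemma map_counit_map (G : CompHaus.{u}ᵒᵖ ⥤ Type u) {X Y : CompHaus.{u}} (f : X ⟶ Y)
    (y : G.obj (op Y)) :
    G.map (counit X).op (G.map f.op y) = G.map (betaMap f).op (G.map (counit Y).op y) := by
  rw [← Functor.map_comp_apply, ← Functor.map_comp_apply, ← op_comp, ← op_comp,
    betaMap_comp_counit]

lemma restrict_naturality
    (γ : (ObjectProperty.ι BSetProp.{u}).op ⋙ F ⟶ (ObjectProperty.ι BSetProp.{u}).op ⋙ F')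
    {T T' : BSet.{u}} (g : T.obj ⟶ T'.obj) (w : F.obj (op T'.obj)) :
    γ.app (op T) (F.map g.op w) = F'.map g.op (γ.app (op T') w) :=
  NatTrans.naturality_apply γ (ObjectProperty.homMk g).op w

lemma eq_of_restrict_eq (hF' : DescentCond F') {η η' : F ⟶ F'}
    (h : Functor.whiskerLeft (ObjectProperty.ι BSetProp.{u}).op η =
      Functor.whiskerLeft (ObjectProperty.ι BSetProp.{u}).op η') : η = η' := by
  refine NatTrans.ext <| funext fun X => ConcreteCategory.hom_ext _ _ fun x => ?_
  apply (hF' _ _ (counit X.unop) (counit_surjective _)).1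
  rw [← NatTrans.naturality_apply, ← NatTrans.naturality_apply]
  exact congrArg (fun θ => θ.app (op (of X.unop)) (F.map (counit X.unop).op x)) h

variable (hF' : DescentCond F')
  (γ : (ObjectProperty.ι BSetProp.{u}).op ⋙ F ⟶ (ObjectProperty.ι BSetProp.{u}).op ⋙ F')

include hF' in
lemma exists_map_counit_eq (X : CompHaus.{u}) (x : F.obj (op X)) :
    ∃ x', F'.map (counit X).op x' = γ.app (op (of X)) (F.map (counit X).op x) := by
  refine ((hF' X _ (counit X) (counit_surjective X)).2 _).1 ?_
  -- `γ` is natural only between β-sets, so compare the two sides after pulling back to `βW`.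
  let W := pullback (counit X) (counit X)
  apply (hF' _ _ (counit W) (counit_surjective W)).1
  simp only [← Functor.map_comp_apply, ← op_comp]
  rw [← restrict_naturality γ (T := of W) (T' := of X),
    ← restrict_naturality γ (T := of W) (T' := of X), ← Functor.map_comp_apply,
    ← Functor.map_comp_apply, ← op_comp, ← op_comp, Category.assoc, Category.assoc,
    pullback.condition]

def extendApp (X : CompHaus.{u}) (x : F.obj (op X)) : F'.obj (op X) :=
  (exists_map_counit_eq hF' γ X x).choose

lemma map_counit_extendApp (X : CompHaus.{u}) (x : F.obj (op X)) :
    F'.map (counit X).op (extendApp hF' γ X x) = γ.app (op (of X)) (F.map (counit X).op x) :=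
  (exists_map_counit_eq hF' γ X x).choose_spec

lemma extendApp_map {X Y : CompHaus.{u}} (f : Y ⟶ X) (x : F.obj (op X)) :
    extendApp hF' γ Y (F.map f.op x) = F'.map f.op (extendApp hF' γ X x) := by
  apply (hF' _ _ (counit Y) (counit_surjective Y)).1
  calc F'.map (counit Y).op (extendApp hF' γ Y (F.map f.op x))
      = γ.app (op (of Y)) (F.map (betaMap f).op (F.map (counit X).op x)) := by
        rw [map_counit_extendApp, map_counit_map]
    _ = F'.map (betaMap f).op (F'.map (counit X).op (extendApp hF' γ X x)) := by
        rw [restrict_naturality, map_counit_extendApp]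
    _ = F'.map (counit Y).op (F'.map f.op (extendApp hF' γ X x)) :=
        (map_counit_map F' f _).symm

def extendHom : F ⟶ F' where
  app X := TypeCat.ofHom (extendApp hF' γ X.unop)
  naturality _ _ ψ := ConcreteCategory.hom_ext _ _ (extendApp_map hF' γ ψ.unop)

lemma restrict_extendHom :
    Functor.whiskerLeft (ObjectProperty.ι BSetProp.{u}).op (extendHom hF' γ) = γ := by
  refine NatTrans.ext <| funext fun T => ConcreteCategory.hom_ext _ _ fun x => ?_
  apply (hF' _ _ (counit T.unop.obj) (counit_surjective _)).1
  exact (map_counit_extendApp hF' γ _ x).trans (restrict_naturality γ (counit T.unop.obj) x)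

end Restriction

end BSet

end

/-- The restriction functor from the category of sheaves of sets on compact
Hausdorff spaces (presheaves satisfying the equalizer descent condition for all continuous
surjections) to the category of presheaves of sets on the full subcategory of β-sets is an
equivalence of categories. -/
theorem stmt14 : res.{u}.IsEquivalence := by
  have : res.{u}.Faithful :=
    ⟨fun {_ F'} _ _ h => InducedCategory.hom_ext (BSet.eq_of_restrict_eq F'.2 h)⟩
  have : res.{u}.Full :=
    ⟨fun {_ F'} γ =>
      ⟨ObjectProperty.homMk (BSet.extendHom F'.2 γ), BSet.restrict_extendHom F'.2 γ⟩⟩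
  have : res.{u}.EssSurj :=
    ⟨fun P => ⟨⟨BSet.extension P, BSet.extension_descentCond P⟩,
      ⟨(BSet.restrictExtensionIso P).symm⟩⟩⟩
  exact {}
end
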